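/- Let G and H be finite simple graphs, each with exactly q ≥ 1 edges, such that every vertex of H is incident with at least one edge. Let f : V(G) → ℕ and g : V(H) → ℕ be injective vertex labelings with induced edge label sets {|f(u) − f(v)| : uv ∈ E(G)} = {1, 3, 5, …, 2q−1} and {|g(x) − g(y)| : xy ∈ E(H)} = {1, 3, 5, …, 2q−1}, and suppose f(V(G)) = g(V(H)) as sets. If φ : V(G) → V(H) is a graph homomorphism satisfying |f(u) − f(v)| = |g(φ(u)) − g(φ(v))| for every edge uv ∈ E(G), then φ is bijective and uv ∈ E(G) ⟺ φ(u)φ(v) ∈ E(H); in particular G and H are isomorphic. -/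

import Mathlib

/-!
Since `H` has `q` edges carrying `q` distinct labels, an edge of `H` is determined by its label.
Every label of `H` is a label of `G` and `φ` preserves labels, so every edge of `H` is the image
of an edge of `G`. Hence `φ` is onto (`H` has no isolated vertices), bijective (the common vertex
label set gives `|V| = |W|`), and reflects adjacency.
-/

lemma ncard_setOf_odd_lt (q : ℕ) :
    {n : ℤ | ∃ k : ℕ, k < q ∧ n = 2 * (k : ℤ) + 1}.ncard = q := by
  have hodd : {n : ℤ | ∃ k : ℕ, k < q ∧ n = 2 * (k : ℤ) + 1} =
      (fun k : ℕ => 2 * (k : ℤ) + 1) '' Set.Iio q := by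
    ext n
    simp [eq_comm]
  rw [hodd, Set.ncard_image_of_injective _ (fun a b hab => by simpa using hab),
    Set.ncard_Iio_nat]

namespace SimpleGraph

variable {V W : Type*}

def edgeLabel (f : V → ℤ) : Sym2 V → ℤ :=
  Sym2.lift ⟨fun u v => |f u - f v|, fun u v => abs_sub_comm (f u) (f v)⟩

@[simp]
lemma edgeLabel_mk (f : V → ℤ) (u v : V) : edgeLabel f s(u, v) = |f u - f v| := rfl

def edgeLabels (G : SimpleGraph V) (f : V → ℤ) : Set ℤ :=
  {n | ∃ u v, G.Adj u v ∧ n = |f u - f v|}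

lemma edgeLabels_eq_image (G : SimpleGraph V) (f : V → ℤ) :
    G.edgeLabels f = edgeLabel f '' G.edgeSet := by
  ext n
  constructor
  · rintro ⟨u, v, huv, rfl⟩
    exact ⟨s(u, v), huv, rfl⟩
  · rintro ⟨e, he, rfl⟩
    induction e using Sym2.ind with
    | _ u v => exact ⟨u, v, he, rfl⟩

lemma injOn_edgeLabel_of_ncard_le [Finite V] {G : SimpleGraph V} {f : V → ℤ}
    (h : G.edgeSet.ncard ≤ (G.edgeLabels f).ncard) : Set.InjOn (edgeLabel f) G.edgeSet := by
  rw [edgeLabels_eq_image] at h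
  exact Set.injOn_of_ncard_image_eq (h.antisymm' Set.ncard_image_le)

section Homomorphism

variable {G : SimpleGraph V} {H : SimpleGraph W} {φ : V → W}

lemma edgeSet_subset_image_map_of_edgeLabels_subset {f : V → ℤ} {g : W → ℤ}
    (hhom : ∀ u v, G.Adj u v → H.Adj (φ u) (φ v))
    (hlabel : ∀ u v, G.Adj u v → |f u - f v| = |g (φ u) - g (φ v)|)
    (hinj : Set.InjOn (edgeLabel g) H.edgeSet) (hE : H.edgeLabels g ⊆ G.edgeLabels f) :
    H.edgeSet ⊆ Sym2.map φ '' G.edgeSet := by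
  intro e he
  induction e using Sym2.ind with
  | _ x y =>
    obtain ⟨a, b, hab, hval⟩ := hE ⟨x, y, he, rfl⟩
    refine ⟨s(a, b), hab, hinj (hhom a b hab) he ?_⟩
    simp [← hlabel a b hab, hval]

lemma surjective_of_edgeSet_subset_image_map (hH : ∀ w, ∃ w', H.Adj w w')
    (h : H.edgeSet ⊆ Sym2.map φ '' G.edgeSet) : Function.Surjective φ := by
  intro w
  obtain ⟨w', hw⟩ := hH w
  obtain ⟨e, -, he⟩ := h (H.mem_edgeSet.2 hw)
  obtain ⟨v, -, rfl⟩ := Sym2.mem_map.1 (he ▸ Sym2.mem_mk_left w w')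
  exact ⟨v, rfl⟩

lemma adj_of_adj_of_edgeSet_subset_image_map (hφ : Function.Injective φ)
    (h : H.edgeSet ⊆ Sym2.map φ '' G.edgeSet) {u v : V} (huv : H.Adj (φ u) (φ v)) :
    G.Adj u v := by
  obtain ⟨e, he, hmap⟩ := h (H.mem_edgeSet.2 huv)
  rw [← Sym2.map_mk] at hmap
  rwa [Sym2.map.injective hφ hmap] at he

end Homomorphism

end SimpleGraph

theorem odd_gracefully_graph_homomorphism_is_isomorphism_general {V W : Type*}
    [Fintype W]
    (G : SimpleGraph V) (H : SimpleGraph W)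
    [DecidableRel H.Adj]
    (q : ℕ)
    (hHq : H.edgeFinset.card = q)
    (hHnoiso : ∀ w : W, ∃ w' : W, H.Adj w w')
    (f : V → ℕ) (g : W → ℕ)
    (hf : Function.Injective f) (hg : Function.Injective g)
    (hEf : {n : ℤ | ∃ u v : V, G.Adj u v ∧ n = |(f u : ℤ) - (f v : ℤ)|}
            = {n : ℤ | ∃ k : ℕ, k < q ∧ n = 2 * (k : ℤ) + 1})
    (hEg : {n : ℤ | ∃ x y : W, H.Adj x y ∧ n = |(g x : ℤ) - (g y : ℤ)|}
            = {n : ℤ | ∃ k : ℕ, k < q ∧ n = 2 * (k : ℤ) + 1})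
    (hV : Set.range f = Set.range g)
    (φ : V → W)
    (hhom : ∀ u v : V, G.Adj u v → H.Adj (φ u) (φ v))
    (hlabel : ∀ u v : V, G.Adj u v →
      |(f u : ℤ) - (f v : ℤ)| = |(g (φ u) : ℤ) - (g (φ v) : ℤ)|) :
    Function.Bijective φ ∧
    (∀ u v : V, G.Adj u v ↔ H.Adj (φ u) (φ v)) ∧
    Nonempty (G ≃g H) := by
  have hinj : Set.InjOn (SimpleGraph.edgeLabel (g ·)) H.edgeSet := by
    refine SimpleGraph.injOn_edgeLabel_of_ncard_le ?_
    rw [← SimpleGraph.coe_edgeFinset, Set.ncard_coe_finset, hHq]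
    exact (ncard_setOf_odd_lt q).ge.trans_eq (congrArg Set.ncard hEg.symm)
  have hcover : H.edgeSet ⊆ Sym2.map φ '' G.edgeSet :=
    SimpleGraph.edgeSet_subset_image_map_of_edgeLabels_subset hhom hlabel hinj
      (hEg.trans hEf.symm).le
  have hsurj : Function.Surjective φ :=
    SimpleGraph.surjective_of_edgeSet_subset_image_map hHnoiso hcover
  let e : V ≃ W :=
    (Equiv.ofInjective f hf).trans ((Equiv.setCongr hV).trans (Equiv.ofInjective g hg).symm)
  have : Finite V := .of_equiv W e.symm
  have hbij : Function.Bijective φ := ⟨hsurj.injective_of_finite e, hsurj⟩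
  have hiff : ∀ u v, G.Adj u v ↔ H.Adj (φ u) (φ v) := fun u v =>
    ⟨hhom u v, SimpleGraph.adj_of_adj_of_edgeSet_subset_image_map hbij.1 hcover⟩
  exact ⟨hbij, hiff, ⟨⟨Equiv.ofBijective φ hbij, (hiff _ _).symm⟩⟩⟩

/-- An odd-gracefully graph homomorphism with equal vertex label sets and equal odd edge
label sets `{1,3,…,2q−1}` is bijective and an isomorphism. -/
theorem odd_gracefully_graph_homomorphism_is_isomorphism {V W : Type*}
    [Fintype V] [Fintype W]
    (G : SimpleGraph V) (H : SimpleGraph W)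
    [DecidableRel G.Adj] [DecidableRel H.Adj]
    (q : ℕ) (hq : 1 ≤ q)
    (hGq : G.edgeFinset.card = q) (hHq : H.edgeFinset.card = q)
    (hHnoiso : ∀ w : W, ∃ w' : W, H.Adj w w')
    (f : V → ℕ) (g : W → ℕ)
    (hf : Function.Injective f) (hg : Function.Injective g)
    (hEf : {n : ℤ | ∃ u v : V, G.Adj u v ∧ n = |(f u : ℤ) - (f v : ℤ)|}
            = {n : ℤ | ∃ k : ℕ, k < q ∧ n = 2 * (k : ℤ) + 1})
    (hEg : {n : ℤ | ∃ x y : W, H.Adj x y ∧ n = |(g x : ℤ) - (g y : ℤ)|}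
            = {n : ℤ | ∃ k : ℕ, k < q ∧ n = 2 * (k : ℤ) + 1})
    (hV : Set.range f = Set.range g)
    (φ : V → W)
    (hhom : ∀ u v : V, G.Adj u v → H.Adj (φ u) (φ v))
    (hlabel : ∀ u v : V, G.Adj u v →
      |(f u : ℤ) - (f v : ℤ)| = |(g (φ u) : ℤ) - (g (φ v) : ℤ)|) :
    Function.Bijective φ ∧
    (∀ u v : V, G.Adj u v ↔ H.Adj (φ u) (φ v)) ∧
    Nonempty (G ≃g H) :=
  odd_gracefully_graph_homomorphism_is_isomorphism_general G H q hHq hHnoiso f g hf hg hEf hEg hV φ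
    hhom hlabel
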